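/- arXiv:1001.1100 — 6 statements merged into one kernel-verified Lean document; each statement's English description precedes it below -/
import Mathlib

section
/- For coprime positive integers m and n, there exist positive integers a and b with m/n = 1/a + 1/b if and only if there exist positive integers x and y such that xy divides n and m divides x + y. -/
theorem stmt_0 (m n : ℕ) (hm : 0 < m) (hn : 0 < n) (h : Nat.gcd m n = 1) :
    (∃ a b : ℕ, 0 < a ∧ 0 < b ∧ (m : ℚ) / n = 1 / a + 1 / b) ↔
    (∃ x y : ℕ, 0 < x ∧ 0 < y ∧ (x * y) ∣ n ∧ m ∣ (x + y)) := by
  have hn' : (n : ℚ) ≠ 0 := by positivity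
  have key : ∀ a b : ℕ, 0 < a → 0 < b →
      (((m : ℚ) / n = 1 / a + 1 / b) ↔ m * a * b = n * (a + b)) := by
    intro a b ha hb
    have ha' : (a : ℚ) ≠ 0 := by positivity
    have hb' : (b : ℚ) ≠ 0 := by positivity
    rw [div_add_div _ _ ha' hb', div_eq_div_iff hn' (mul_ne_zero ha' hb')]
    constructor
    · intro hq
      exact_mod_cast (by push_cast; linear_combination hq : ((m*a*b : ℕ) : ℚ) = ((n*(a+b) : ℕ) : ℚ))
    · intro hq
      have : ((m*a*b : ℕ) : ℚ) = ((n*(a+b) : ℕ) : ℚ) := by exact_mod_cast hq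
      push_cast at this
      linear_combination this
  constructor
  · rintro ⟨a, b, ha, hb, heq⟩
    rw [key a b ha hb] at heq
    have hg : 0 < Nat.gcd a b := Nat.gcd_pos_of_pos_left _ ha
    obtain ⟨g, a', b', hg', co, rfl, rfl⟩ := Nat.exists_coprime' hg
    have ha' : 0 < a' := Nat.pos_of_ne_zero (fun h0 => by simp [h0] at ha)
    have hb' : 0 < b' := Nat.pos_of_ne_zero (fun h0 => by simp [h0] at hb)
    -- cancel one g
    have heq2 : m * g * (a' * b') = n * (a' + b') := by
      have : (m * g * (a' * b')) * g = (n * (a' + b')) * g := by ring_nf; ring_nf at heq; linarith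
      exact Nat.eq_of_mul_eq_mul_right hg' this
    refine ⟨a', b', ha', hb', ?_, ?_⟩
    · have cop : Nat.Coprime (a' * b') (a' + b') := by
        have c1 : Nat.Coprime a' (a' + b') := by
          rw [add_comm, Nat.coprime_add_self_right]; exact co
        have c2 : Nat.Coprime b' (a' + b') := by
          rw [Nat.coprime_add_self_right]; exact co.symm
        exact Nat.Coprime.mul c1 c2
      have hdvd : (a' * b') ∣ n * (a' + b') := ⟨m * g, by linarith [heq2]⟩
      exact cop.dvd_of_dvd_mul_right hdvd
    · have hdvd : m ∣ n * (a' + b') := ⟨g * (a' * b'), by linarith [heq2]⟩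
      exact (Nat.Coprime.dvd_of_dvd_mul_left h hdvd)
  · rintro ⟨x, y, hx, hy, hdvd, hmdvd⟩
    obtain ⟨d, hd⟩ := hdvd
    obtain ⟨k, hk⟩ := hmdvd
    have hd' : 0 < d := by
      rcases Nat.eq_zero_or_pos d with h0 | h0
      · simp [h0] at hd; omega
      · exact h0
    have hk' : 0 < k := by
      rcases Nat.eq_zero_or_pos k with h0 | h0
      · simp [h0] at hk; omega
      · exact h0
    refine ⟨k * d * x, k * d * y, by positivity, by positivity, ?_⟩
    rw [key _ _ (by positivity) (by positivity)]
    calc m * (k * d * x) * (k * d * y) = (m * k) * (k * d) * (x * y * d) := by ring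
      _ = (x + y) * (k * d) * n := by rw [← hk, ← hd]
      _ = n * (k * d * x + k * d * y) := by ring
end

section
/- If n is a positive integer with n ≥ 2 and n not congruent to 1 modulo 12, then there exist positive integers a, b, c with 4/n = 1/a + 1/b + 1/c. -/
lemma es_key (n a b c : ℕ) (hn : 0 < n) (ha : 0 < a) (hb : 0 < b) (hc : 0 < c)
    (h : 4 * (a * b * c) = n * (b * c + a * c + a * b)) :
    (4 : ℚ) / n = 1 / a + 1 / b + 1 / c := by
  have hn' : (n : ℚ) ≠ 0 := Nat.cast_ne_zero.mpr hn.ne'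
  have ha' : (a : ℚ) ≠ 0 := Nat.cast_ne_zero.mpr ha.ne'
  have hb' : (b : ℚ) ≠ 0 := Nat.cast_ne_zero.mpr hb.ne'
  have hc' : (c : ℚ) ≠ 0 := Nat.cast_ne_zero.mpr hc.ne'
  have h' : (4 : ℚ) * (a * b * c) = n * (b * c + a * c + a * b) := by
    exact_mod_cast congrArg (Nat.cast : ℕ → ℚ) h
  field_simp
  ring_nf
  ring_nf at h'
  linarith

theorem stmt_7 (n : ℕ) (hn : 2 ≤ n) (h : n % 12 ≠ 1) :
    ∃ a b c : ℕ, 0 < a ∧ 0 < b ∧ 0 < c ∧ (4 : ℚ) / n = 1 / a + 1 / b + 1 / c := by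
  have hn0 : 0 < n := by omega
  rcases Nat.even_or_odd n with he | ho
  · obtain ⟨k, hk⟩ := he
    have hk1 : 0 < k := by omega
    refine ⟨k, 2 * k, 2 * k, hk1, by omega, by omega, es_key _ _ _ _ hn0 hk1 (by omega) (by omega) ?_⟩
    subst hk; ring
  · rcases Nat.lt_or_ge (n % 4) 3 with h4 | h4
    · -- n % 4 = 1, so n % 3 = 0 or 2
      have h41 : n % 4 = 1 := by
        obtain ⟨m, hm⟩ := ho; omega
      rcases Nat.lt_or_ge (n % 3) 1 with h3 | h3
      · -- n = 3m
        obtain ⟨m, hm⟩ : ∃ m, n = 3 * m := ⟨n / 3, by omega⟩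
        have hm1 : 0 < m := by omega
        refine ⟨m, 3 * m + 1, 3 * m * (3 * m + 1), hm1, by omega, by positivity,
          es_key _ _ _ _ hn0 hm1 (by omega) (by positivity) ?_⟩
        subst hm; ring
      · -- n % 3 = 2 (n % 3 = 1 with n % 4 = 1 gives n % 12 = 1)
        have h32 : n % 3 = 2 := by omega
        obtain ⟨m, hm⟩ : ∃ m, n = 3 * m + 2 := ⟨n / 3, by omega⟩
        refine ⟨n, m + 1, n * (m + 1), hn0, by omega, by positivity,
          es_key _ _ _ _ hn0 hn0 (by omega) (by positivity) ?_⟩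
        subst hm; ring
    · -- n % 4 = 3
      have h43 : n % 4 = 3 := by omega
      obtain ⟨k, hk⟩ : ∃ k, n = 4 * k + 3 := ⟨n / 4, by omega⟩
      refine ⟨k + 1, n * (k + 1) + 1, n * (k + 1) * (n * (k + 1) + 1), by omega, by omega,
        by positivity, es_key _ _ _ _ hn0 (by omega) (by omega) (by positivity) ?_⟩
      subst hk; ring
end

section
/- If n is a positive integer with n ≥ 2 and n not congruent to 1 modulo 24, then there exist positive integers a, b, c with 4/n = 1/a + 1/b + 1/c. -/
theorem stmt_8 (n : ℕ) (hn : 2 ≤ n) (h : n % 24 ≠ 1) :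
    ∃ a b c : ℕ, 0 < a ∧ 0 < b ∧ 0 < c ∧ (4 : ℚ) / n = 1 / a + 1 / b + 1 / c := by
  by_cases h2 : n % 2 = 0
  · -- n = 2m : 4/(2m) = 1/m + 1/(2m) + 1/(2m)
    obtain ⟨m, hm⟩ : ∃ m, n = 2 * m := ⟨n / 2, by omega⟩
    subst hm
    have hm0 : 0 < m := by omega
    refine ⟨m, 2 * m, 2 * m, hm0, by omega, by omega, ?_⟩
    have : (m : ℚ) > 0 := by exact_mod_cast hm0
    push_cast
    field_simp
    ring
  by_cases h4 : n % 4 = 3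
  · -- n = 4k+3 : 4/n = 1/(k+1) + 1/(2(k+1)n) + 1/(2(k+1)n)
    obtain ⟨k, hk⟩ : ∃ k, n = 4 * k + 3 := ⟨n / 4, by omega⟩
    subst hk
    refine ⟨k + 1, 2 * (k + 1) * (4 * k + 3), 2 * (k + 1) * (4 * k + 3),
      by positivity, by positivity, by positivity, ?_⟩
    have hk0 : (k : ℚ) ≥ 0 := by positivity
    push_cast
    have h1 : (k : ℚ) + 1 ≠ 0 := by positivity
    have h2 : (4 * (k : ℚ) + 3) ≠ 0 := by positivity
    field_simp
    ring
  by_cases h3 : n % 3 = 0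
  · -- n = 3m : 4/(3m) = 1/m + 1/(4m) + 1/(12m)
    obtain ⟨m, hm⟩ : ∃ m, n = 3 * m := ⟨n / 3, by omega⟩
    subst hm
    have hm0 : 0 < m := by omega
    refine ⟨m, 4 * m, 12 * m, hm0, by omega, by omega, ?_⟩
    have : (m : ℚ) > 0 := by exact_mod_cast hm0
    push_cast
    field_simp
    ring
  by_cases h3' : n % 3 = 2
  · -- n = 3k+2 : 4/n = 1/n + 1/(k+1) + 1/(n(k+1))
    obtain ⟨k, hk⟩ : ∃ k, n = 3 * k + 2 := ⟨n / 3, by omega⟩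
    subst hk
    refine ⟨3 * k + 2, k + 1, (3 * k + 2) * (k + 1), by positivity, by positivity, by positivity, ?_⟩
    have hk0 : (k : ℚ) ≥ 0 := by positivity
    push_cast
    have h1 : (k : ℚ) + 1 ≠ 0 := by positivity
    have h2 : (3 * (k : ℚ) + 2) ≠ 0 := by positivity
    field_simp
    ring
  · -- remaining: n ≡ 13 mod 24.  n = 24t+13 :
    -- 4/n = 1/(6t+4) + 1/(2n(t+1)) + 1/(2n(t+1)(3t+2))
    obtain ⟨t, ht⟩ : ∃ t, n = 24 * t + 13 := ⟨n / 24, by omega⟩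
    subst ht
    refine ⟨6 * t + 4, 2 * (24 * t + 13) * (t + 1),
      2 * (24 * t + 13) * (t + 1) * (3 * t + 2), by positivity, by positivity, by positivity, ?_⟩
    have ht0 : (t : ℚ) ≥ 0 := by positivity
    push_cast
    have h1 : (6 * (t : ℚ) + 4) ≠ 0 := by positivity
    have h2 : (24 * (t : ℚ) + 13) ≠ 0 := by positivity
    have h3 : ((t : ℚ) + 1) ≠ 0 := by positivity
    have h4 : (3 * (t : ℚ) + 2) ≠ 0 := by positivity
    field_simp
    ring
end

section
/- If n ≥ 2 is an integer with n ≡ 1 (mod 24) and n ≢ 1, 25, 121 (mod 168), then there exist positive integers a, b, c with 4/n = 1/a + 1/b + 1/c. -/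
theorem stmt_10 (n : ℕ) (hn : 2 ≤ n) (h24 : n % 24 = 1)
    (h : n % 168 ≠ 1 ∧ n % 168 ≠ 25 ∧ n % 168 ≠ 121) :
    ∃ a b c : ℕ, 0 < a ∧ 0 < b ∧ 0 < c ∧ (4 : ℚ) / n = 1 / a + 1 / b + 1 / c := by
  obtain ⟨h1, h2, h3⟩ := h
  set k := n / 168 with hk
  have hr : n % 168 = 49 ∨ n % 168 = 73 ∨ n % 168 = 97 ∨ n % 168 = 145 := by omega
  rcases hr with hr | hr | hr | hr
  · refine ⟨48 * k + 14, 360 * k + 105, 5040 * k + 1470, by omega, by omega, by omega, ?_⟩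
    rw [show n = 168 * k + 49 by omega]
    push_cast
    have hk0 : (0 : ℚ) ≤ (k : ℚ) := Nat.cast_nonneg k
    rw [div_add_div _ _ (by positivity) (by positivity), div_add_div _ _ (by positivity) (by positivity),
      div_eq_div_iff (by positivity) (by positivity)]
    ring
  · refine ⟨48 * k + 21, 336 * k + 146, 16128 * k ^ 2 + 14064 * k + 3066, by omega, by omega, by positivity, ?_⟩
    rw [show n = 168 * k + 73 by omega]
    push_cast
    have hk0 : (0 : ℚ) ≤ (k : ℚ) := Nat.cast_nonneg k
    rw [div_add_div _ _ (by positivity) (by positivity), div_add_div _ _ (by positivity) (by positivity),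
      div_eq_div_iff (by positivity) (by positivity)]
    ring
  · refine ⟨48 * k + 28, 336 * k + 194, 8064 * k ^ 2 + 9360 * k + 2716, by omega, by omega, by positivity, ?_⟩
    rw [show n = 168 * k + 97 by omega]
    push_cast
    have hk0 : (0 : ℚ) ≤ (k : ℚ) := Nat.cast_nonneg k
    rw [div_add_div _ _ (by positivity) (by positivity), div_add_div _ _ (by positivity) (by positivity),
      div_eq_div_iff (by positivity) (by positivity)]
    ring
  · refine ⟨48 * k + 42, 336 * k + 290, 4032 * k ^ 2 + 7008 * k + 3045, by omega, by omega, by positivity, ?_⟩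
    rw [show n = 168 * k + 145 by omega]
    push_cast
    have hk0 : (0 : ℚ) ≤ (k : ℚ) := Nat.cast_nonneg k
    rw [div_add_div _ _ (by positivity) (by positivity), div_add_div _ _ (by positivity) (by positivity),
      div_eq_div_iff (by positivity) (by positivity)]
    ring
end

section
/- If n ≥ 2 is an integer with n ≡ 1 (mod 24) and n ≢ 1, 49 (mod 120), then there exist positive integers a, b, c with 4/n = 1/a + 1/b + 1/c. -/
/-!
Modulo 120 the hypotheses leave `n ≡ 25, 73, 97`, that is `5 ∣ n`, `n ≡ 33 (mod 40)` or
`n ≡ 17 (mod 20)`. The first case scales `4/5 = 1/2 + 1/4 + 1/20`. In the other two,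
`n + r = 4e` with `r = 7, e = 10s` resp. `r = 3, e = 5m`, and `4/n = 1/e + r/(en)` where `r/e`
splits into two unit fractions.
-/

def ErdosStrausSolvable (n : ℕ) : Prop :=
  ∃ a b c : ℕ, 0 < a ∧ 0 < b ∧ 0 < c ∧ (4 : ℚ) / n = 1 / a + 1 / b + 1 / c

namespace ErdosStrausSolvable

theorem mul_right {m k : ℕ} (h : ErdosStrausSolvable m) (hk : 0 < k) :
    ErdosStrausSolvable (m * k) := by
  obtain ⟨a, b, c, ha, hb, hc, habc⟩ := h
  refine ⟨a * k, b * k, c * k, by positivity, by positivity, by positivity, ?_⟩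
  push_cast
  simp only [div_mul_eq_div_div, ← add_div, ← habc]

theorem five : ErdosStrausSolvable 5 :=
  ⟨2, 4, 20, by norm_num, by norm_num, by norm_num, by norm_num⟩

theorem of_add_eq_four_mul {n r e x y : ℕ} (hn : 0 < n) (he : n + r = 4 * e) (hx : 0 < x)
    (hy : 0 < y) (hr : (r : ℚ) / e = 1 / x + 1 / y) : ErdosStrausSolvable n := by
  have he0 : 0 < e := by omega
  refine ⟨e, x * n, y * n, he0, by positivity, by positivity, ?_⟩
  have hsum : (n : ℚ) + r = 4 * e := by exact_mod_cast he
  have hnq : (n : ℚ) ≠ 0 := by positivity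
  have he0q : (e : ℚ) ≠ 0 := by positivity
  push_cast
  calc (4 : ℚ) / n = 1 / e + r / e / n := by field_simp; linear_combination -hsum
    _ = 1 / e + 1 / (x * n) + 1 / (y * n) := by rw [hr]; field_simp; ring

theorem of_five_dvd {n : ℕ} (hn : 0 < n) (h5 : 5 ∣ n) : ErdosStrausSolvable n := by
  obtain ⟨k, rfl⟩ := h5
  exact five.mul_right (by omega)

theorem of_mod_forty_eq {n : ℕ} (h : n % 40 = 33) : ErdosStrausSolvable n := by
  obtain ⟨s, hs⟩ : ∃ s, n + 7 = 4 * (10 * s) := ⟨(n + 7) / 40, by omega⟩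
  refine of_add_eq_four_mul (x := 2 * s) (y := 5 * s) (by omega) hs (by omega) (by omega) ?_
  push_cast
  field_simp
  norm_num

theorem of_mod_twenty_eq {n : ℕ} (h : n % 20 = 17) : ErdosStrausSolvable n := by
  obtain ⟨m, hm⟩ : ∃ m, n + 3 = 4 * (5 * m) := ⟨(n + 3) / 20, by omega⟩
  refine of_add_eq_four_mul (x := 2 * m) (y := 10 * m) (by omega) hm (by omega) (by omega) ?_
  push_cast
  field_simp
  norm_num

end ErdosStrausSolvable

theorem stmt_11_general (n : ℕ) (h24 : n % 24 = 1)
    (h : n % 120 ≠ 1 ∧ n % 120 ≠ 49) :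
    ∃ a b c : ℕ, 0 < a ∧ 0 < b ∧ 0 < c ∧ (4 : ℚ) / n = 1 / a + 1 / b + 1 / c := by
  have hcases : n % 120 = 25 ∨ n % 120 = 73 ∨ n % 120 = 97 := by omega
  rcases hcases with h25 | h73 | h97
  · exact ErdosStrausSolvable.of_five_dvd (by omega) (by omega)
  · exact ErdosStrausSolvable.of_mod_forty_eq (by omega)
  · exact ErdosStrausSolvable.of_mod_twenty_eq (by omega)

theorem stmt_11 (n : ℕ) (hn : 2 ≤ n) (h24 : n % 24 = 1)
    (h : n % 120 ≠ 1 ∧ n % 120 ≠ 49) :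
    ∃ a b c : ℕ, 0 < a ∧ 0 < b ∧ 0 < c ∧ (4 : ℚ) / n = 1 / a + 1 / b + 1 / c :=
  stmt_11_general n h24 h
end

section
/- If n is a positive integer with n ≡ 1 (mod 24), n = 24k+1, and k ≡ 2 (mod 7), then 7 divides n, and consequently there exist positive integers a, b, c with 4/n = 1/a + 1/b + 1/c. -/
theorem stmt_19 (n k : ℕ) (hn : 0 < n) (h24 : n % 24 = 1) (hk : n = 24 * k + 1)
    (h7 : k % 7 = 2) :
    7 ∣ n ∧ ∃ a b c : ℕ, 0 < a ∧ 0 < b ∧ 0 < c ∧ (4 : ℚ) / n = 1 / a + 1 / b + 1 / c := by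
  have hkeq : k = 7 * (k / 7) + 2 := by omega
  set j := k / 7 with hj
  have hne : n = 7 * (24 * j + 7) := by omega
  refine ⟨⟨24 * j + 7, hne⟩, 2 * (24 * j + 7), 15 * (24 * j + 7), 210 * (24 * j + 7),
    by positivity, by positivity, by positivity, ?_⟩
  have hm : ((24 * j + 7 : ℕ) : ℚ) ≠ 0 := by positivity
  rw [hne]
  push_cast
  field_simp
  ring
end
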